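/- arXiv:1110.4439 — 2 statements merged into one kernel-verified Lean document; each statement's English description precedes it below -/
import Mathlib

section
/- Let l, m, n be positive integers, Q : Fin l → Fin m → ℤ an integer matrix, and v : Fin m → (Fin n → ℤ) a family of integer vectors satisfying the relations Σ_{i ∈ Fin m} (Q a i) · (v i) = 0 in ℤ^n for every a ∈ Fin l. Let U = {A : Fin m → ℂ | A i ≠ 0 for all i} and define the monomial map y : U → (Fin l → ℂ) by y(A) a = ∏_{i} (A i)^{Q a i} (integer powers of nonzero complex numbers). Let W be an open subset of Fin l → ℂ, let Ψ be complex-analytic on W, and set Φ = Ψ ∘ y on U′ = {A ∈ U | y(A) ∈ W}. Then Φ satisfies the first set of GKZ equations: for every j ∈ Fin n and every A ∈ U′, Σ_{i ∈ Fin m} (v i j) · (A i) · (∂_i Φ)(A) = 0. -/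
/-!
The torus `t ↦ (A i * exp (t * v i j))_i` acts on each monomial `∏ i, A i ^ Q a i` by the
character `exp (t * ∑ i, Q a i * v i j)`, which is trivial by the relations. Hence `Φ = Ψ ∘ y`
is constant along the orbit through `A`; differentiating at `t = 0` gives
`∑ i, v i j * A i * ∂_i Φ (A) = 0`.
-/

open Complex

variable {ι : Type*}

theorem prod_mul_exp_zpow [Fintype ι] (A w : ι → ℂ) (Q : ι → ℤ) (t : ℂ) :
    ∏ i, (A i * exp (t * w i)) ^ Q i = (∏ i, A i ^ Q i) * exp (t * ∑ i, Q i * w i) := by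
  simp only [mul_zpow, Finset.prod_mul_distrib, ← exp_int_mul, Finset.mul_sum, ← exp_sum]
  congr 2
  exact Finset.sum_congr rfl fun i _ => by ring

theorem differentiableAt_prod_zpow [Fintype ι] {κ : Type*} (Q : κ → ι → ℤ) {A : ι → ℂ}
    (hA : ∀ i, A i ≠ 0) :
    DifferentiableAt ℂ (fun B : ι → ℂ => fun a => ∏ i, B i ^ Q a i) A := by
  fun_prop (disch := simp [hA])

theorem hasDerivAt_torus_orbit (A w : ι → ℂ) :
    HasDerivAt (fun t : ℂ => fun i => A i * exp (t * w i)) (fun i => w i * A i) 0 := by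
  refine hasDerivAt_pi.2 fun i => ?_
  simpa [mul_comm] using ((hasDerivAt_id (0 : ℂ)).mul_const (w i)).cexp.const_mul (A i)

theorem sum_mul_fderiv_single_eq_zero_of_torus_invariant [Fintype ι] [DecidableEq ι]
    {f : (ι → ℂ) → ℂ} {A w : ι → ℂ} (hf : DifferentiableAt ℂ f A)
    (hinv : ∀ t, f (fun i => A i * exp (t * w i)) = f A) :
    ∑ i, w i * (A i * fderiv ℂ f A (Pi.single i 1)) = 0 := by
  have horbit : HasDerivAt (fun t => f fun i => A i * exp (t * w i))
      (fderiv ℂ f A fun i => w i * A i) 0 :=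
    hf.hasFDerivAt.comp_hasDerivAt_of_eq 0 (hasDerivAt_torus_orbit A w) (by simp)
  have hconst : HasDerivAt (fun t => f fun i => A i * exp (t * w i)) 0 0 := by
    simpa only [hinv] using hasDerivAt_const (0 : ℂ) (f A)
  have hzero := horbit.unique hconst
  rw [pi_eq_sum_univ' fun i => w i * A i, map_sum] at hzero
  simpa [mul_assoc] using hzero

theorem stmt3_general (l m n : ℕ)
    (Q : Fin l → Fin m → ℤ) (v : Fin m → Fin n → ℤ)
    (hrel : ∀ (a : Fin l) (j : Fin n), ∑ i, Q a i * v i j = 0)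
    (y : (Fin m → ℂ) → (Fin l → ℂ))
    (hy : ∀ (A : Fin m → ℂ) (a : Fin l), y A a = ∏ i, (A i) ^ (Q a i))
    (W : Set (Fin l → ℂ)) (Ψ : (Fin l → ℂ) → ℂ)
    (hΨ : AnalyticOnNhd ℂ Ψ W)
    (j : Fin n) (A : Fin m → ℂ) (hA : ∀ i, A i ≠ 0) (hAW : y A ∈ W) :
    ∑ i, (v i j : ℂ) * (A i * fderiv ℂ (Ψ ∘ y) A (Pi.single i 1)) = 0 := by
  have hy_eq : y = fun B a => ∏ i, B i ^ Q a i := funext₂ hy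
  have hΦ : DifferentiableAt ℂ (Ψ ∘ y) A :=
    (hΨ _ hAW).differentiableAt.comp A (hy_eq ▸ differentiableAt_prod_zpow Q hA)
  refine sum_mul_fderiv_single_eq_zero_of_torus_invariant hΦ fun t => ?_
  have hrel' : ∀ a, ∑ i, (Q a i : ℂ) * v i j = 0 := fun a => mod_cast hrel a j
  simp only [Function.comp_apply, hy_eq, prod_mul_exp_zpow, hrel', mul_zero, exp_zero, mul_one]

/-- First set of GKZ equations: if the relations `Σ_i (Q a i) · v i = 0` hold for every
`a`, `y(A)_a = ∏_i (A i)^{Q a i}` on the torus `{A | ∀ i, A i ≠ 0}`, `Ψ` is analytic on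
an open set `W`, and `Φ = Ψ ∘ y`, then for every `j` and every `A` in the torus with
`y(A) ∈ W` one has `Σ_i (v i j) · A i · ∂_i Φ (A) = 0`. -/
theorem stmt3 (l m n : ℕ) (hl : 0 < l) (hm : 0 < m) (hn : 0 < n)
    (Q : Fin l → Fin m → ℤ) (v : Fin m → Fin n → ℤ)
    (hrel : ∀ (a : Fin l) (j : Fin n), ∑ i, Q a i * v i j = 0)
    (y : (Fin m → ℂ) → (Fin l → ℂ))
    (hy : ∀ (A : Fin m → ℂ) (a : Fin l), y A a = ∏ i, (A i) ^ (Q a i))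
    (W : Set (Fin l → ℂ)) (hW : IsOpen W) (Ψ : (Fin l → ℂ) → ℂ)
    (hΨ : AnalyticOnNhd ℂ Ψ W)
    (j : Fin n) (A : Fin m → ℂ) (hA : ∀ i, A i ≠ 0) (hAW : y A ∈ W) :
    ∑ i, (v i j : ℂ) * (A i * fderiv ℂ (Ψ ∘ y) A (Pi.single i 1)) = 0 :=
  stmt3_general l m n Q v hrel y hy W Ψ hΨ j A hA hAW
end

section
/- Let m be a positive integer, ℓ : Fin m → ℤ an integer vector, and Φ : (Fin m → ℂ) → ℂ an entire function. For i ∈ Fin m let 𝒟_i be the operator sending a function g to A ↦ (A i)·(∂_i g)(A). Then for every A with A i ≠ 0 for all i, the following factorization identity holds: (∏_{i : ℓ i > 0} ∂_i^{ℓ i})Φ(A) − (∏_{i : ℓ i < 0} ∂_i^{−ℓ i})Φ(A) = (∏_{i : ℓ i > 0} (A i)^{−ℓ i}) · [ (∏_{i : ℓ i > 0} ∏_{k=0}^{ℓ i − 1}(𝒟_i − k))Φ(A) − (∏_{j ∈ Fin m} (A j)^{ℓ j}) · (∏_{i : ℓ i < 0} ∏_{k=0}^{−ℓ i − 1}(𝒟_i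 − k))Φ(A) ], where the products of operators denote compositions taken in increasing order of i and, for fixed i, increasing order of k (these operators pairwise commute on entire functions). -/
/-- Composition of a list of operators, in order: `[T₀, T₁, …] ↦ T₀ ∘ T₁ ∘ ⋯`. -/
def compList {α : Type*} (ops : List (α → α)) : α → α :=
  ops.foldr (· ∘ ·) id

/-- The partial derivative operator in the `i`-th coordinate:
`(pdiff i g)(A) = ∂_i g (A) = (fderiv ℂ g A)(e_i)`. -/
noncomputable def pdiff {m : ℕ} (i : Fin m) (g : (Fin m → ℂ) → ℂ) : (Fin m → ℂ) → ℂ :=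
  fun A => fderiv ℂ g A (Pi.single i 1)

/-- The shifted Euler operator `(𝒟_i − k)(g)(A) = (A i)·(∂_i g)(A) − k·g(A)`. -/
noncomputable def eulerOp {m : ℕ} (i : Fin m) (k : ℕ) (g : (Fin m → ℂ) → ℂ) :
    (Fin m → ℂ) → ℂ :=
  fun A => A i * fderiv ℂ g A (Pi.single i 1) - (k : ℂ) * g A

/-!
In one variable the falling-factorial product of Euler operators is a monomial times a pure
derivative: `∏_{k<n} (𝒟_i − k) = (A i)^n ∂_i^n`, by induction on `n` from
`∂_i^n (𝒟_i − k) g = A i ∂_i^{n+1} g + (n − k) ∂_i^n g`. Since `∂_i` commutes with multiplication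
by monomials in the other coordinates, the blocks for distinct coordinates combine into
`(∏_{i ∈ L} (A i)^{n i}) ∏_{i ∈ L} ∂_i^{n i}`. On the torus these monomials are invertible, and
the identity becomes a rearrangement of
`∏_j (A j)^{ℓ j} = ∏_{ℓ i > 0} (A i)^{ℓ i} ∏_{ℓ i < 0} (A i)^{ℓ i}`.
-/

open Set

section compList

variable {α : Type*}

@[simp]
lemma compList_nil (x : α) : compList [] x = x := rfl

@[simp]
lemma compList_cons (T : α → α) (ops : List (α → α)) (x : α) :
    compList (T :: ops) x = T (compList ops x) := rfl

lemma compList_append (ops₁ ops₂ : List (α → α)) (x : α) :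
    compList (ops₁ ++ ops₂) x = compList ops₁ (compList ops₂ x) := by
  induction ops₁ with
  | nil => rfl
  | cons T ops ih => simp [ih]

lemma compList_induction {P : α → Prop} {ops : List (α → α)}
    (hops : ∀ T ∈ ops, ∀ x, P x → P (T x)) {x : α} (hx : P x) : P (compList ops x) := by
  induction ops with
  | nil => exact hx
  | cons T ops ih =>
    exact hops T List.mem_cons_self _ (ih fun T' hT' => hops T' (List.mem_cons_of_mem T hT'))

end compList

variable {m : ℕ} {f g : (Fin m → ℂ) → ℂ}

lemma analyticOnNhd_pdiff (hf : AnalyticOnNhd ℂ f univ) (i : Fin m) :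
    AnalyticOnNhd ℂ (pdiff i f) univ := fun A _ =>
  ((ContinuousLinearMap.apply ℂ ℂ (Pi.single i 1)).analyticAt _).fun_comp (hf.fderiv A trivial)

lemma analyticOnNhd_iterate_pdiff (hf : AnalyticOnNhd ℂ f univ) (i : Fin m) (n : ℕ) :
    AnalyticOnNhd ℂ ((pdiff i)^[n] f) univ := by
  induction n with
  | zero => exact hf
  | succ n ih => simpa only [Function.iterate_succ_apply'] using analyticOnNhd_pdiff ih i

lemma analyticOnNhd_coord (i : Fin m) : AnalyticOnNhd ℂ (fun A : Fin m → ℂ => A i) univ :=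
  (ContinuousLinearMap.proj i : (Fin m → ℂ) →L[ℂ] ℂ).analyticOnNhd _

lemma analyticOnNhd_eulerOp (hf : AnalyticOnNhd ℂ f univ) (i : Fin m) (k : ℕ) :
    AnalyticOnNhd ℂ (eulerOp i k f) univ := fun A hA =>
  ((analyticOnNhd_coord i A hA).mul (analyticOnNhd_pdiff hf i A hA)).sub
    (analyticAt_const.mul (hf A hA))

lemma pdiff_add (hf : Differentiable ℂ f) (hg : Differentiable ℂ g) (i : Fin m) :
    pdiff i (fun A => f A + g A) = fun A => pdiff i f A + pdiff i g A := by
  funext A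
  simp only [pdiff, fderiv_fun_add (hf A) (hg A), add_apply]

lemma pdiff_mul (hf : Differentiable ℂ f) (hg : Differentiable ℂ g) (i : Fin m) :
    pdiff i (fun A => f A * g A) = fun A => pdiff i f A * g A + f A * pdiff i g A := by
  funext A
  simp only [pdiff, fderiv_fun_mul (hf A) (hg A), add_apply, smul_apply, smul_eq_mul]
  ring

lemma pdiff_const (c : ℂ) (i : Fin m) : pdiff i (fun _ => c) = 0 := by
  funext A
  simp [pdiff]

lemma pdiff_coord (i j : Fin m) :
    pdiff i (fun A => A j) = fun _ => (Pi.single i 1 : Fin m → ℂ) j := by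
  funext A
  simp [pdiff, (hasFDerivAt_apply (𝕜 := ℂ) j A).fderiv]

lemma pdiff_coord_pow_of_ne {i j : Fin m} (hij : j ≠ i) (n : ℕ) :
    pdiff i (fun A => A j ^ n) = 0 := by
  funext A
  simp [pdiff, fderiv_fun_pow n (differentiableAt_apply (𝕜 := ℂ) j A),
    (hasFDerivAt_apply (𝕜 := ℂ) j A).fderiv, hij]

lemma pdiff_prod_coord_pow_of_notMem (n : Fin m → ℕ) {i : Fin m} {s : Finset (Fin m)}
    (hi : i ∉ s) : pdiff i (fun A => ∏ j ∈ s, A j ^ n j) = 0 := by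
  induction s using Finset.induction_on with
  | empty => simpa using pdiff_const 1 i
  | insert j s hj ih =>
    simp only [Finset.prod_insert hj]
    rw [pdiff_mul (by fun_prop) (by fun_prop), pdiff_coord_pow_of_ne (by grind),
      ih (by grind)]
    funext A
    simp

lemma differentiable_iterate_pdiff (hf : AnalyticOnNhd ℂ f univ) (i : Fin m) (n : ℕ) :
    Differentiable ℂ ((pdiff i)^[n] f) :=
  differentiableOn_univ.mp (analyticOnNhd_iterate_pdiff hf i n).differentiableOn

lemma iterate_pdiff_eulerOp (hg : AnalyticOnNhd ℂ g univ) (i : Fin m) (k n : ℕ) :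
    (pdiff i)^[n] (eulerOp i k g)
      = fun A => A i * (pdiff i)^[n + 1] g A + ((n : ℂ) - k) * (pdiff i)^[n] g A := by
  induction n with
  | zero =>
    funext A
    simp only [Function.iterate_zero, id_eq, zero_add, Function.iterate_one, eulerOp, pdiff]
    ring
  | succ n ih =>
    have hd := differentiable_iterate_pdiff hg i
    rw [Function.iterate_succ_apply', ih, pdiff_add (by fun_prop) (by fun_prop),
      pdiff_mul (by fun_prop) (hd _), pdiff_mul (by fun_prop) (hd _), pdiff_coord, pdiff_const]
    funext A
    simp only [Function.iterate_succ_apply', Pi.single_eq_same, Pi.zero_apply]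
    push_cast
    ring

lemma compList_eulerOp_range (hg : AnalyticOnNhd ℂ g univ) (i : Fin m) (n : ℕ) :
    compList ((List.range n).map (eulerOp i)) g = fun A => A i ^ n * (pdiff i)^[n] g A := by
  induction n generalizing g with
  | zero => simp
  | succ n ih =>
    rw [List.range_succ, List.map_append, compList_append, List.map_singleton, compList_cons,
      compList_nil, ih (analyticOnNhd_eulerOp hg i n), iterate_pdiff_eulerOp hg]
    funext A
    simp only [sub_self, zero_mul, add_zero]
    ring

lemma iterate_pdiff_mul_of_pdiff_eq_zero {h : (Fin m → ℂ) → ℂ} {i : Fin m}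
    (hh : Differentiable ℂ h) (hi : pdiff i h = 0) (hf : AnalyticOnNhd ℂ f univ) (n : ℕ) :
    (pdiff i)^[n] (fun A => h A * f A) = fun A => h A * (pdiff i)^[n] f A := by
  induction n with
  | zero => rfl
  | succ n ih =>
    rw [Function.iterate_succ_apply', ih, pdiff_mul hh (differentiable_iterate_pdiff hf i n), hi]
    funext A
    simp [Function.iterate_succ_apply']

lemma analyticOnNhd_compList_eulerOp_range (n : Fin m → ℕ) (L : List (Fin m))
    (hf : AnalyticOnNhd ℂ f univ) :
    AnalyticOnNhd ℂ (compList (L.map fun i => compList ((List.range (n i)).map (eulerOp i))) f)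
      univ := by
  refine compList_induction (P := fun g => AnalyticOnNhd ℂ g univ) ?_ hf
  simp only [List.mem_map]
  rintro _ ⟨i, -, rfl⟩ g hg
  refine compList_induction (P := fun g => AnalyticOnNhd ℂ g univ) ?_ hg
  simp only [List.mem_map]
  rintro _ ⟨k, -, rfl⟩ g' hg'
  exact analyticOnNhd_eulerOp hg' i k

lemma analyticOnNhd_compList_iterate_pdiff (n : Fin m → ℕ) (L : List (Fin m))
    (hf : AnalyticOnNhd ℂ f univ) :
    AnalyticOnNhd ℂ (compList (L.map fun i => (pdiff i)^[n i]) f) univ := by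
  refine compList_induction (P := fun g => AnalyticOnNhd ℂ g univ) ?_ hf
  simp only [List.mem_map]
  rintro _ ⟨i, -, rfl⟩ g hg
  exact analyticOnNhd_iterate_pdiff hg i (n i)

lemma compList_eulerOp_blocks (hf : AnalyticOnNhd ℂ f univ) (n : Fin m → ℕ)
    {L : List (Fin m)} (hL : L.Nodup) :
    compList (L.map fun i => compList ((List.range (n i)).map (eulerOp i))) f
      = fun A => (∏ j ∈ L.toFinset, A j ^ n j) * compList (L.map fun i => (pdiff i)^[n i]) f A := by
  induction L with
  | nil => simp
  | cons j L ih =>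
    obtain ⟨hj, hL⟩ := List.nodup_cons.mp hL
    have hj' : j ∉ L.toFinset := List.mem_toFinset.not.mpr hj
    rw [List.map_cons, compList_cons,
      compList_eulerOp_range (analyticOnNhd_compList_eulerOp_range n L hf), ih hL,
      iterate_pdiff_mul_of_pdiff_eq_zero (by fun_prop)
        (pdiff_prod_coord_pow_of_notMem n hj')
        (analyticOnNhd_compList_iterate_pdiff n L hf)]
    funext A
    simp only [List.toFinset_cons, Finset.prod_insert hj', List.map_cons, compList_cons]
    ring

section zpow

variable {ι G : Type*} [DivisionCommMonoid G] (s : Finset ι) (a : ι → G) (k : ι → ℤ)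

lemma prod_pow_toNat_of_nonneg (hk : ∀ i ∈ s, 0 ≤ k i) :
    ∏ i ∈ s, a i ^ (k i).toNat = ∏ i ∈ s, a i ^ k i :=
  Finset.prod_congr rfl fun i hi => by rw [← zpow_natCast, Int.toNat_of_nonneg (hk i hi)]

lemma prod_zpow_eq_prod_pos_mul_prod_neg :
    ∏ i ∈ s, a i ^ k i = (∏ i ∈ s with 0 < k i, a i ^ k i) * ∏ i ∈ s with k i < 0, a i ^ k i := by
  rw [← s.prod_filter_mul_prod_filter_not (fun i => 0 < k i)]
  congr 1
  refine (Finset.prod_subset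
    (Finset.monotone_filter_right s fun _ _ => not_lt.mpr ∘ le_of_lt) fun i hi hi' => ?_).symm
  simp only [Finset.mem_filter, not_and, not_lt] at hi hi'
  simp [show k i = 0 by have := hi' hi.1; omega]

end zpow

theorem stmt5_general (m : ℕ) (ℓ : Fin m → ℤ) (Φ : (Fin m → ℂ) → ℂ)
    (hΦ : AnalyticOnNhd ℂ Φ Set.univ) (A : Fin m → ℂ) (hA : ∀ i, A i ≠ 0) :
    compList (((List.finRange m).filter (fun i => decide (0 < ℓ i))).map
        (fun i => (pdiff i)^[(ℓ i).toNat])) Φ A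
      - compList (((List.finRange m).filter (fun i => decide (ℓ i < 0))).map
          (fun i => (pdiff i)^[(-ℓ i).toNat])) Φ A
    = (∏ i ∈ Finset.univ.filter (fun i => 0 < ℓ i), (A i) ^ (-ℓ i)) *
        (compList (((List.finRange m).filter (fun i => decide (0 < ℓ i))).map
            (fun i => compList ((List.range (ℓ i).toNat).map (eulerOp i)))) Φ A
          - (∏ j, (A j) ^ (ℓ j)) *
            compList (((List.finRange m).filter (fun i => decide (ℓ i < 0))).map
                (fun i => compList ((List.range (-ℓ i).toNat).map (eulerOp i)))) Φ A) := by
  rw [compList_eulerOp_blocks hΦ _ ((List.nodup_finRange m).filter _),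
    compList_eulerOp_blocks hΦ _ ((List.nodup_finRange m).filter _)]
  simp only [List.toFinset_filter, List.toFinset_finRange, decide_eq_true_eq]
  rw [prod_pow_toNat_of_nonneg _ _ _ (by simp +contextual [le_of_lt]),
    prod_pow_toNat_of_nonneg _ _ (fun i => -ℓ i) (by simp +contextual [le_of_lt]),
    prod_zpow_eq_prod_pos_mul_prod_neg Finset.univ A ℓ]
  have hprod_ne_zero (p : Fin m → Prop) [DecidablePred p] : ∏ i with p i, A i ^ ℓ i ≠ 0 :=
    Finset.prod_ne_zero_iff.mpr fun i _ => zpow_ne_zero _ (hA i)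
  simp only [zpow_neg, Finset.prod_inv_distrib]
  field_simp [hprod_ne_zero]

/-- The GKZ box operator
`∏_{i : ℓ i > 0} ∂_i^{ℓ i} − ∏_{i : ℓ i < 0} ∂_i^{−ℓ i}` applied to an entire function
`Φ` factors, at any point `A` of the torus `{A | ∀ i, A i ≠ 0}`, as the monomial
`∏_{i : ℓ i > 0} (A i)^{−ℓ i}` times
`(∏_{i : ℓ i > 0} ∏_{k=0}^{ℓ i − 1}(𝒟_i − k))Φ(A)
 − (∏_j (A j)^{ℓ j}) · (∏_{i : ℓ i < 0} ∏_{k=0}^{−ℓ i − 1}(𝒟_i − k))Φ(A)`;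
operator products are compositions in increasing order of `i` and, for fixed `i`,
increasing order of `k`. -/
theorem stmt5 (m : ℕ) (hm : 0 < m) (ℓ : Fin m → ℤ) (Φ : (Fin m → ℂ) → ℂ)
    (hΦ : AnalyticOnNhd ℂ Φ Set.univ) (A : Fin m → ℂ) (hA : ∀ i, A i ≠ 0) :
    compList (((List.finRange m).filter (fun i => decide (0 < ℓ i))).map
        (fun i => (pdiff i)^[(ℓ i).toNat])) Φ A
      - compList (((List.finRange m).filter (fun i => decide (ℓ i < 0))).map
          (fun i => (pdiff i)^[(-ℓ i).toNat])) Φ A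
    = (∏ i ∈ Finset.univ.filter (fun i => 0 < ℓ i), (A i) ^ (-ℓ i)) *
        (compList (((List.finRange m).filter (fun i => decide (0 < ℓ i))).map
            (fun i => compList ((List.range (ℓ i).toNat).map (eulerOp i)))) Φ A
          - (∏ j, (A j) ^ (ℓ j)) *
            compList (((List.finRange m).filter (fun i => decide (ℓ i < 0))).map
                (fun i => compList ((List.range (-ℓ i).toNat).map (eulerOp i)))) Φ A) :=
  stmt5_general m ℓ Φ hΦ A hA
end
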